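/- Let $E$ be an elliptic curve without CM, $g \ge 2$, and $\tilde\phi = (N\phi|\phi'): E^{g+s} \to E^r$ a special morphism of rank $r$ (so $\phi = (aI_r|L)$ is Gauss-reduced and $H(\tilde\phi) = Na$). Suppose $(x, \gamma) \in E^g \times E^s$ and $\xi \in E^{g+s}$ with $\|\xi\| \le \varepsilon / a^{1 + \frac{1}{2n}}$ satisfy $\tilde\phi((x,\gamma) + \xi) = 0$, where $\gamma \in E^s$ is fixed and $\Gamma_0$ is the division closure of the group generated by the coordinates of $\gamma$. Then there exist $y \in \Gamma_0^r \times \{0\}^{g-r}$ and $\xi' \in E^g$ with $\|\xi'\| \le (g+s)\varepsilon / a^{1+\frac{1}{2n}}$ such that $\phi(x + y + \xi') \in \ker[N]$, and consequently $x + y \in B_\phi + E^r_{\mathrm{Tor}}\times\{0\}^{g-r} + \mathcal{O}_{(g+s)\varepsilon/a^{1+\frac{1}{2n}}}$. -/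

import Mathlib

private lemma nm_sum_le {G : Type} [AddCommGroup G] (nm : G → ℝ)
    (h0 : nm 0 = 0) (hadd : ∀ x y : G, nm (x + y) ≤ nm x + nm y)
    {ι : Type*} (t : Finset ι) (f : ι → G) :
    nm (∑ j ∈ t, f j) ≤ ∑ j ∈ t, nm (f j) := by
  classical
  induction t using Finset.induction with
  | empty => simp [h0]
  | insert _ _ hj ih =>
    rw [Finset.sum_insert hj, Finset.sum_insert hj]
    exact le_trans (hadd _ _) (by linarith)

/-- Let `E` be an elliptic curve without CM, `g ≥ 2`, and
`φ̃ = (N φ | φ') : E^{g+s} → E^r` a special morphism of rank `r` (`φ = (a I_r | L)`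
Gauss-reduced, entries of gcd 1, and `H(φ̃) = N a`). Suppose `(x, γ) ∈ E^g × E^s` and
`ξ = (ξ, ξs) ∈ E^{g+s}` with `‖ξ‖ ≤ ε / a^{1 + 1/(2n)}` satisfy `φ̃((x,γ) + ξ) = 0`, where
`Γ₀` is the division closure of the subgroup generated by the coordinates of `γ`. Then there
are `y ∈ Γ₀^r × {0}^{g-r}` and `ξ'` with `‖ξ'‖ ≤ (g+s) ε / a^{1 + 1/(2n)}` such that
`φ(x + y + ξ') ∈ ker [N]`, and consequently
`x + y ∈ B_φ + E^r_Tor × {0}^{g-r} + O_{(g+s)ε / a^{1+1/(2n)}}`. -/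
theorem stmt_19 (g s r n : ℕ) (hg : 2 ≤ g) (hrg : r ≤ g) (hn : 0 < n)
    (G : Type) [AddCommGroup G] (nm : G → ℝ)
    (hnm0 : nm 0 = 0)
    (hnm_nonneg : ∀ x : G, 0 ≤ nm x)
    (hnm_add : ∀ x y : G, nm (x + y) ≤ nm x + nm y)
    (hnm_smul : ∀ (k : ℤ) (x : G), nm (k • x) = |(k : ℝ)| * nm x)
    (hdiv : ∀ (k : ℤ), k ≠ 0 → ∀ z : G, ∃ w : G, k • w = z)
    (φ : Matrix (Fin r) (Fin g) ℤ) (φ' : Matrix (Fin r) (Fin s) ℤ)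
    (N a : ℤ) (hN : 0 < N) (ha : 0 < a)
    (hid : ∀ i j : Fin r, φ i (Fin.castLE hrg j) = if i = j then a else 0)
    (hHφ : ∀ i j, |φ i j| ≤ a)
    (hgcdφ : ∀ d : ℤ, (∀ i j, d ∣ φ i j) → IsUnit d)
    (hHtil : ∀ i j, |φ' i j| ≤ N * a)
    (hgcdtil : ∀ d : ℤ, ((∀ i j, d ∣ N * φ i j) ∧ (∀ i j, d ∣ φ' i j)) → IsUnit d)
    (Γ₀ : AddSubgroup G)
    (hsat : ∀ (k : ℤ), k ≠ 0 → ∀ z : G, k • z ∈ Γ₀ → z ∈ Γ₀)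
    (γ : Fin s → G) (hγ : ∀ i, γ i ∈ Γ₀)
    (ε : ℝ) (hε : 0 ≤ ε)
    (x ξ : Fin g → G) (ξs : Fin s → G)
    (hξ : ∀ j, nm (ξ j) ≤ ε / (a : ℝ) ^ ((1 : ℝ) + 1 / (2 * (n : ℝ))))
    (hξs : ∀ j, nm (ξs j) ≤ ε / (a : ℝ) ^ ((1 : ℝ) + 1 / (2 * (n : ℝ))))
    (hker : ∀ i, (∑ j, (N * φ i j) • (x j + ξ j)) + ∑ j, φ' i j • (γ j + ξs j) = 0) :
    ∃ y : Fin g → G,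
      (∀ j, y j ∈ Γ₀) ∧ (∀ j : Fin g, r ≤ (j : ℕ) → y j = 0) ∧
      (∃ ξ' : Fin g → G,
        (∀ j, nm (ξ' j) ≤ (g + s : ℝ) * ε / (a : ℝ) ^ ((1 : ℝ) + 1 / (2 * (n : ℝ)))) ∧
        ∀ i, N • (∑ j, φ i j • (x j + y j + ξ' j)) = 0) ∧
      (∃ b t ξ'' : Fin g → G,
        (∀ i, ∑ j, φ i j • b j = 0) ∧
        (∀ j, ∃ k : ℤ, k ≠ 0 ∧ k • t j = 0) ∧
        (∀ j : Fin g, r ≤ (j : ℕ) → t j = 0) ∧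
        (∀ j, nm (ξ'' j) ≤ (g + s : ℝ) * ε / (a : ℝ) ^ ((1 : ℝ) + 1 / (2 * (n : ℝ)))) ∧
        x + y = b + t + ξ'') := by
  classical
  set δ : ℝ := ε / (a : ℝ) ^ ((1 : ℝ) + 1 / (2 * (n : ℝ))) with hδdef
  have haR : (0:ℝ) < (a:ℝ) := by exact_mod_cast ha
  have hap : (0:ℝ) < (a : ℝ) ^ ((1 : ℝ) + 1 / (2 * (n : ℝ))) := Real.rpow_pos_of_pos haR _
  have hδ0 : 0 ≤ δ := div_nonneg hε hap.le
  have hNa : (N * a : ℤ) ≠ 0 := by positivity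
  have hNaR : (0:ℝ) < ((N*a : ℤ) : ℝ) := by exact_mod_cast mul_pos hN ha
  -- key sum-extension lemma
  have key : ∀ (F : Fin g → G), (∀ j : Fin g, ¬((j:ℕ) < r) → F j = 0) →
      ∑ j, F j = ∑ j : Fin r, F (Fin.castLE hrg j) := by
    intro F hF
    have h1 : ∑ j ∈ Finset.univ.map (Fin.castLEEmb hrg), F j
        = ∑ j : Fin r, F (Fin.castLE hrg j) := by
      rw [Finset.sum_map]
      exact Finset.sum_congr rfl fun j _ => by simp
    rw [← h1]
    refine (Finset.sum_subset (Finset.subset_univ _) ?_).symm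
    intro j _ hj
    refine hF j fun hlt => hj ?_
    simp only [Finset.mem_map, Finset.mem_univ, true_and]
    exact ⟨⟨j, hlt⟩, by simp⟩
  -- step 1: choose w
  have hw0 : ∀ i : Fin r, ∃ w : G, (N*a) • w = ∑ j, φ' i j • γ j :=
    fun i => hdiv (N*a) hNa _
  choose w hw using hw0
  have hwΓ : ∀ i, w i ∈ Γ₀ := by
    intro i
    refine hsat (N*a) hNa _ ?_
    rw [hw i]
    exact AddSubgroup.sum_mem _ fun j _ => AddSubgroup.zsmul_mem _ (hγ j) _
  -- step 2: choose u
  have hu0 : ∀ i : Fin r, ∃ u : G,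
      (N*a) • u = (∑ j, (N * φ i j) • ξ j) + ∑ j, φ' i j • ξs j :=
    fun i => hdiv (N*a) hNa _
  choose u hu using hu0
  have hubound : ∀ i, nm (u i) ≤ (g + s : ℝ) * δ := by
    intro i
    have h1 : nm ((N*a) • u i) = ((N*a : ℤ):ℝ) * nm (u i) := by
      rw [hnm_smul]; congr 1; rw [abs_of_pos hNaR]
    have h2 : nm ((∑ j, (N * φ i j) • ξ j) + ∑ j, φ' i j • ξs j)
        ≤ (g + s : ℝ) * (((N*a:ℤ):ℝ) * δ) := by
      have hA : nm (∑ j, (N * φ i j) • ξ j) ≤ (g : ℝ) * (((N*a:ℤ):ℝ) * δ) := by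
        calc nm (∑ j, (N * φ i j) • ξ j) ≤ ∑ j, nm ((N * φ i j) • ξ j) :=
              nm_sum_le nm hnm0 hnm_add _ _
          _ ≤ ∑ _j : Fin g, ((N*a:ℤ):ℝ) * δ := by
              refine Finset.sum_le_sum fun j _ => ?_
              rw [hnm_smul]
              refine mul_le_mul ?_ (hξ j) (hnm_nonneg _) hNaR.le
              have : |N * φ i j| ≤ N * a := by
                rw [abs_mul, abs_of_pos hN]
                exact mul_le_mul_of_nonneg_left (hHφ i j) hN.le
              exact_mod_cast this
          _ = (g : ℝ) * (((N*a:ℤ):ℝ) * δ) := by simp [Finset.sum_const, mul_comm]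
      have hB : nm (∑ j, φ' i j • ξs j) ≤ (s : ℝ) * (((N*a:ℤ):ℝ) * δ) := by
        calc nm (∑ j, φ' i j • ξs j) ≤ ∑ j, nm (φ' i j • ξs j) :=
              nm_sum_le nm hnm0 hnm_add _ _
          _ ≤ ∑ _j : Fin s, ((N*a:ℤ):ℝ) * δ := by
              refine Finset.sum_le_sum fun j _ => ?_
              rw [hnm_smul]
              refine mul_le_mul ?_ (hξs j) (hnm_nonneg _) hNaR.le
              exact_mod_cast hHtil i j
          _ = (s : ℝ) * (((N*a:ℤ):ℝ) * δ) := by simp [Finset.sum_const, mul_comm]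
      calc nm _ ≤ _ + _ := hnm_add _ _
        _ ≤ (g + s : ℝ) * (((N*a:ℤ):ℝ) * δ) := by push_cast at hA hB ⊢; linarith
    have h3 : ((N*a:ℤ):ℝ) * nm (u i) ≤ ((N*a:ℤ):ℝ) * ((g + s : ℝ) * δ) := by
      rw [← h1, hu i]
      calc nm _ ≤ (g + s : ℝ) * (((N*a:ℤ):ℝ) * δ) := h2
        _ = ((N*a:ℤ):ℝ) * ((g + s : ℝ) * δ) := by ring
    exact (mul_le_mul_iff_right₀ hNaR).mp h3
  -- definitions of y and ξ'
  set y : Fin g → G := fun j => if h : (j:ℕ) < r then w ⟨j, h⟩ else 0 with hydef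
  set ξ' : Fin g → G := fun j => if h : (j:ℕ) < r then u ⟨j, h⟩ else 0 with hξ'def
  have hsumy : ∀ i : Fin r, ∑ j, φ i j • y j = a • w i := by
    intro i
    rw [key (fun j => φ i j • y j) (by intro j hj; simp [hydef, hj])]
    have : ∀ j : Fin r, φ i (Fin.castLE hrg j) • y (Fin.castLE hrg j)
        = (if i = j then a else 0) • w j := by
      intro j
      rw [hid i j]
      congr 1
      simp [hydef, Fin.castLE]
    simp only [this, ite_smul, zero_smul, Finset.sum_ite_eq, Finset.mem_univ, if_true]
  have hsumξ' : ∀ i : Fin r, ∑ j, φ i j • ξ' j = a • u i := by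
    intro i
    rw [key (fun j => φ i j • ξ' j) (by intro j hj; simp [hξ'def, hj])]
    have : ∀ j : Fin r, φ i (Fin.castLE hrg j) • ξ' (Fin.castLE hrg j)
        = (if i = j then a else 0) • u j := by
      intro j
      rw [hid i j]
      congr 1
      simp [hξ'def, Fin.castLE]
    simp only [this, ite_smul, zero_smul, Finset.sum_ite_eq, Finset.mem_univ, if_true]
  have hbound' : ∀ j, nm (ξ' j) ≤ (g + s : ℝ) * ε / (a : ℝ) ^ ((1 : ℝ) + 1 / (2 * (n : ℝ))) := by
    intro j
    have hgoal : (g + s : ℝ) * ε / (a : ℝ) ^ ((1 : ℝ) + 1 / (2 * (n : ℝ))) = (g + s : ℝ) * δ := by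
      rw [hδdef]; ring
    rw [hgoal]
    by_cases h : (j:ℕ) < r
    · simpa [hξ'def, h] using hubound ⟨j, h⟩
    · simp only [hξ'def, h, dif_neg, not_false_iff]
      rw [hnm0]
      positivity
  -- main kernel identity
  have hmain : ∀ i, N • (∑ j, φ i j • (x j + y j + ξ' j)) = 0 := by
    intro i
    have hsplit : ∑ j, φ i j • (x j + y j + ξ' j)
        = (∑ j, φ i j • x j) + a • w i + a • u i := by
      simp only [smul_add, Finset.sum_add_distrib, hsumy i, hsumξ' i]
    rw [hsplit, smul_add, smul_add, smul_smul, smul_smul, hw i, hu i, Finset.smul_sum]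
    simp only [smul_smul]
    have hk := hker i
    simp only [smul_add, Finset.sum_add_distrib] at hk
    rw [← hk]
    abel
  -- decomposition
  have hdivz : ∀ i : Fin r, ∃ v : G, a • v = ∑ j, φ i j • (x j + y j + ξ' j) :=
    fun i => hdiv a (by positivity) _
  choose v hv using hdivz
  set t : Fin g → G := fun j => if h : (j:ℕ) < r then v ⟨j, h⟩ else 0 with htdef
  refine ⟨y, ?_, ?_, ⟨ξ', hbound', hmain⟩,
    (fun j => x j + y j + ξ' j - t j), t, (fun j => -(ξ' j)), ?_, ?_, ?_, ?_, ?_⟩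
  · intro j
    by_cases h : (j:ℕ) < r
    · simpa [hydef, h] using hwΓ ⟨j, h⟩
    · simp [hydef, h, AddSubgroup.zero_mem]
  · intro j hj
    simp [hydef, Nat.not_lt.mpr hj]
  · intro i
    have hsumt : ∑ j, φ i j • t j = a • v i := by
      rw [key (fun j => φ i j • t j) (by intro j hj; simp [htdef, hj])]
      have : ∀ j : Fin r, φ i (Fin.castLE hrg j) • t (Fin.castLE hrg j)
          = (if i = j then a else 0) • v j := by
        intro j
        rw [hid i j]
        congr 1
        simp [htdef, Fin.castLE]
      simp only [this, ite_smul, zero_smul, Finset.sum_ite_eq, Finset.mem_univ, if_true]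
    simp only [smul_sub, Finset.sum_sub_distrib, hsumt, hv i, sub_self]
  · intro j
    by_cases h : (j:ℕ) < r
    · refine ⟨N * a, hNa, ?_⟩
      have : (N * a) • t j = N • (a • v ⟨j, h⟩) := by
        rw [smul_smul]; simp [htdef, h]
      rw [this, hv ⟨j, h⟩, hmain ⟨j, h⟩]
    · exact ⟨1, one_ne_zero, by simp [htdef, h]⟩
  · intro j hj
    simp [htdef, Nat.not_lt.mpr hj]
  · intro j
    have : nm (-(ξ' j)) = nm (ξ' j) := by
      have h := hnm_smul (-1) (ξ' j); simpa using h
    rw [this]; exact hbound' j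
  · funext j
    simp only [Pi.add_apply]
    abel
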